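/- arXiv:1510.06392 — 3 statements merged into one kernel-verified Lean document; each statement's English description precedes it below -/
import Mathlib

section
/- Homotopy formula for equivariant differential cohomology of finite groups: if i_t : M → [0,1] × M denotes inclusion at time t, G acts trivially on [0,1], and x̂ ∈ Ĥ^n_G([0,1] × M, ℤ), then i_1* x̂ − i_0* x̂ = a(∫_{[0,1]×M/M} R(x̂)), where ∫_{[0,1]×M/M} denotes fiber integration over the interval. -/
set_option autoImplicit false

/-- Homotopy formula for equivariant differential cohomology of a finite group `G`:
for `x̂ ∈ Ĥ^n_G([0,1] × M, ℤ)` one has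
`i₁* x̂ − i₀* x̂ = a(∫_{[0,1]×M/M} R(x̂))`.

Abstract setting: `H = Ĥ^n_G(M,ℤ)`, `HI = Ĥ^n_G([0,1]×M,ℤ)`; `Z`, `ZI` the equivariant
integral cohomologies; `F = Ω^{n-1}(M)^G/im d`, `FI` the analogue on `[0,1]×M`;
`C`, `CI` the closed invariant `n`-forms.  The maps are: `i₀, i₁` the restrictions
along the inclusions at times `0, 1` (on differential cohomology and, as `i0F, i1F`,
on forms), `pr*` the pullbacks along the projection `[0,1]×M → M`, `I, II` the
characteristic class maps, `aM, aI` the inclusions of forms, `RI` the curvature, `d`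
the exterior differential, and `fib` the fiber integration `∫_{[0,1]×M/M}`.
Hypotheses: homotopy invariance of integral cohomology (`prZ` surjective),
surjectivity of `I`, exactness `ker II = im aI`, naturality of `I` and of `a` with
respect to pullbacks, `iₜ* ∘ pr* = id`, Stokes' theorem for fiber integration
(`i₁*ω − i₀*ω = ∫ dω`), `R ∘ a = d`, and vanishing of fiber integrals of forms pulled
back from `M`. -/
theorem homotopy_formula_equivariant_differential_cohomology
    {H HI Z ZI F FI C CI : Type*}
    [AddCommGroup H] [AddCommGroup HI] [AddCommGroup Z] [AddCommGroup ZI]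
    [AddCommGroup F] [AddCommGroup FI] [AddCommGroup C] [AddCommGroup CI]
    (i0 i1 : HI →+ H) (i0F i1F : FI →+ F)
    (prH : H →+ HI) (prZ : Z →+ ZI)
    (I : H →+ Z) (II : HI →+ ZI)
    (aM : F →+ H) (aI : FI →+ HI)
    (RI : HI →+ CI) (d : FI →+ CI)
    (fib : CI →+ F)
    (hhtp : Function.Surjective prZ)
    (hIsurj : Function.Surjective I)
    (hexact : ∀ x : HI, II x = 0 → ∃ ω : FI, aI ω = x)
    (hInat : ∀ y : H, II (prH y) = prZ (I y))
    (hanat0 : ∀ ω : FI, i0 (aI ω) = aM (i0F ω))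
    (hanat1 : ∀ ω : FI, i1 (aI ω) = aM (i1F ω))
    (hpr0 : ∀ y : H, i0 (prH y) = y)
    (hpr1 : ∀ y : H, i1 (prH y) = y)
    (hstokes : ∀ ω : FI, i1F ω - i0F ω = fib (d ω))
    (hRa : ∀ ω : FI, RI (aI ω) = d ω)
    (hfibpr : ∀ y : H, fib (RI (prH y)) = 0) :
    ∀ x : HI, i1 x - i0 x = aM (fib (RI x)) := by
  intro x
  obtain ⟨z, hz⟩ := hhtp (II x)
  obtain ⟨y, hy⟩ := hIsurj z
  obtain ⟨ω, hω⟩ := hexact (x - prH y) (by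
    rw [map_sub, hInat, hy, hz, sub_self])
  have hx : x = aI ω + prH y := by rw [hω]; abel
  calc i1 x - i0 x
      = (aM (i1F ω) + y) - (aM (i0F ω) + y) := by
        rw [hx, map_add, map_add, hanat0, hanat1, hpr0, hpr1]
    _ = aM (i1F ω - i0F ω) := by rw [map_sub]; abel
    _ = aM (fib (RI (x - prH y))) := by rw [hstokes, ← hRa, hω]
    _ = aM (fib (RI x)) := by
        rw [map_sub, map_sub, map_sub, hfibpr, map_zero, sub_zero]
end

section
/- For a compact Lie group G acting on a point, the full equivariant differential cohomology is: Ĥ^n_G(pt,ℤ) ≅ H^n(BG,ℤ) when n is even, and Ĥ^n_G(pt,ℤ) ≅ H^{n-1}(BG, ℂ/ℤ) when n is odd. -/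
set_option autoImplicit false

/-- Full equivariant differential cohomology of a point for a compact Lie group `G`:
`Ĥ^n_G(pt,ℤ) ≅ H^n(BG,ℤ)` for `n` even and `Ĥ^n_G(pt,ℤ) ≅ H^{n-1}(BG,ℂ/ℤ)` for `n` odd.

Abstract setting (the hexagon for a point): `Hhat n = Ĥ^n_G(pt,ℤ)`,
`HZ n = H^n(BG,ℤ)`, `HCZ n = H^n(BG,ℂ/ℤ)`, and `Ω n = Ω^n_G(pt)` is
`(S^{n/2}(𝔤^∨))^G` for `n` even and `0` for `n` odd (hypothesis `hΩodd`).  From the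
hexagon: `a : Ω^{n} → Ĥ^{n+1}` with exact diagonal `im a = ker I`, `I` surjective;
`j : H^{n}(BG,ℂ/ℤ) → Ĥ^{n+1}` injective with `im j = ker R` for the curvature
`R : Ĥ^n → Ω^n` (the Cartan differential on a point is zero, so every element of
`Ω^n` is closed).  Conclusion: `I` is bijective in even degrees and `j` is bijective
onto odd degrees. -/
theorem equivariant_differential_cohomology_of_point
    {Hhat HZ HCZ Ω : ℕ → Type*}
    [∀ n, AddCommGroup (Hhat n)] [∀ n, AddCommGroup (HZ n)]
    [∀ n, AddCommGroup (HCZ n)] [∀ n, AddCommGroup (Ω n)]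
    (a : ∀ n, Ω n →+ Hhat (n + 1))
    (I : ∀ n, Hhat n →+ HZ n)
    (j : ∀ n, HCZ n →+ Hhat (n + 1))
    (R : ∀ n, Hhat n →+ Ω n)
    (hΩodd : ∀ n, Odd n → ∀ x : Ω n, x = 0)
    (hIsurj : ∀ n, Function.Surjective (I n))
    (hexactI : ∀ n (x : Hhat (n + 1)), I (n + 1) x = 0 ↔ ∃ ω : Ω n, a n ω = x)
    (hjinj : ∀ n, Function.Injective (j n))
    (hexactR : ∀ n (x : Hhat (n + 1)), R (n + 1) x = 0 ↔ ∃ c : HCZ n, j n c = x) :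
    ∀ n : ℕ,
      (Even (n + 1) → Function.Bijective (I (n + 1))) ∧
      (Odd (n + 1) → Function.Bijective (j n)) := by
  intro n
  constructor
  · intro hev
    refine ⟨?_, hIsurj (n + 1)⟩
    have hnodd : Odd n := by
      rwa [Nat.even_add_one, Nat.not_even_iff_odd] at hev
    intro x y hxy
    have hz : I (n + 1) (x - y) = 0 := by simp [map_sub, hxy]
    rcases (hexactI n (x - y)).mp hz with ⟨ω, hω⟩
    have : ω = 0 := hΩodd n hnodd ω
    subst this
    simpa [sub_eq_zero] using hω.symm
  · intro hodd
    refine ⟨hjinj n, ?_⟩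
    intro x
    have hR : R (n + 1) x = 0 := hΩodd (n + 1) hodd _
    exact (hexactR n x).mp hR
end

section
/- The cellular computation of the equivariant cohomology of the conjugation action of S³ on itself gives H^k_{S³}(S³, R) = R for k = 0, 3, 4 and 0 for k = 1, 2, for any coefficient ring R. This follows from the simplicial cellular double complex with one 0-cell and one 3-cell on S³ per factor, in which ∂^{(0)} = 0 and ∂^{(1)}(a,b) = (0,0,b). -/
set_option autoImplicit false

/-! The cellular computation of `H^k_{S³}(S³,R)` for the conjugation action of
`S³ = SU(2)` on itself.  Model `ES³ ×_{S³} S³` by the simplicial manifold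
`(S³)^• × S³`; with the CW structure on `S³` with one 0-cell and one 3-cell, the
simplicial cellular cochain double complex has, in total degrees `≤ 5`, total groups
`T⁰ = R`, `T¹ = R`, `T² = R`, `T³ = R ⊕ R`, `T⁴ = R ⊕ R²`, `T⁵ = R ⊕ R³`
(column 0 in each row, plus column 3 with `R^{p+1}` in row `p`).  The vertical
differentials in column 0 alternate between `0` and `1`, `∂⁽⁰⁾ = 0` and
`∂⁽¹⁾(a,b) = (0,0,b)` in column 3.  The total cohomology is `R` in degrees
`0, 3, 4` and `0` in degrees `1, 2`, i.e. `H^k_{S³}(S³,R) = R` for `k = 0,3,4` and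
vanishes for `k = 1,2`. -/

variable (R : Type*) [CommRing R]

/-- `D⁰ : T⁰ → T¹`, the vertical differential `0` in column 0, row 0. -/
def D0 : R →+ R := 0

/-- `D¹ : T¹ → T²`, the vertical differential `1` in column 0, row 1. -/
def D1 : R →+ R := AddMonoidHom.id R

/-- `D² : T² → T³ = C^{3,0} ⊕ C^{0,3}`, given by the vertical `0` in column 0. -/
def D2 : R →+ R × R := 0

/-- `D³ : T³ = C^{3,0} ⊕ C^{0,3} → T⁴ = C^{4,0} ⊕ C^{1,3}`: the identity on the
column-0 part and `∂⁽⁰⁾ = 0` on the column-3 part. -/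
def D3 : R × R →+ R × (R × R) :=
  AddMonoidHom.mk' (fun x => (x.1, (0, 0))) (by intro a b; ext <;> simp)

/-- `D⁴ : T⁴ = C^{4,0} ⊕ C^{1,3} → T⁵ = C^{5,0} ⊕ C^{2,3}`: `0` on the column-0 part
and `∂⁽¹⁾(a,b) = (0,0,b)` on the column-3 part. -/
def D4 : R × (R × R) →+ R × (R × R × R) :=
  AddMonoidHom.mk' (fun x => (0, (0, 0, x.2.2))) (by intro a b; ext <;> simp)

/-- The total cohomology of the simplicial cellular double complex computing
`H^k_{S³}(S³,R)`: it is `R` in degrees `0, 3, 4` and `0` in degrees `1, 2`. -/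
theorem equivariant_cohomology_of_conjugation_action_on_S3 :
    Nonempty (((D0 R).ker) ≃+ R) ∧
    Subsingleton ((D1 R).ker ⧸ ((D0 R).range.addSubgroupOf (D1 R).ker)) ∧
    Subsingleton ((D2 R).ker ⧸ ((D1 R).range.addSubgroupOf (D2 R).ker)) ∧
    Nonempty (((D3 R).ker ⧸ ((D2 R).range.addSubgroupOf (D3 R).ker)) ≃+ R) ∧
    Nonempty (((D4 R).ker ⧸ ((D3 R).range.addSubgroupOf (D4 R).ker)) ≃+ R) := by
  refine ⟨?_, ?_, ?_, ?_, ?_⟩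
  · have h : (D0 R).ker = ⊤ := by ext x; simp [D0]
    exact ⟨h ▸ AddSubgroup.topEquiv⟩
  · haveI : Subsingleton ((D1 R).ker) := by
      constructor
      rintro ⟨a, ha⟩ ⟨b, hb⟩
      simp [D1, AddMonoidHom.mem_ker] at ha hb
      subst ha; subst hb; rfl
    exact (QuotientAddGroup.mk'_surjective _).subsingleton
  · have h : (D1 R).range.addSubgroupOf (D2 R).ker = ⊤ := by
      ext ⟨x, hx⟩
      simp [AddSubgroup.mem_addSubgroupOf, D1]
    rw [h]
    exact QuotientAddGroup.subsingleton_quotient_top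
  · set φ : (D3 R).ker →+ R :=
      AddMonoidHom.mk' (fun v => (v : R × R).2) (by intro a b; rfl) with hφ
    have hker : (D2 R).range.addSubgroupOf (D3 R).ker = φ.ker := by
      ext ⟨⟨x, y⟩, hv⟩
      have hx : x = 0 := by
        simpa [D3, AddMonoidHom.mem_ker, Prod.ext_iff] using hv
      simp [AddSubgroup.mem_addSubgroupOf, D2, AddMonoidHom.mem_ker, hφ,
        Prod.ext_iff, hx, eq_comm, Subtype.ext_iff]
    have hsurj : Function.Surjective φ := by
      intro r
      refine ⟨⟨(0, r), ?_⟩, rfl⟩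
      simp [D3, AddMonoidHom.mem_ker, Prod.ext_iff]
    rw [hker]
    exact ⟨QuotientAddGroup.quotientKerEquivOfSurjective φ hsurj⟩
  · set φ : (D4 R).ker →+ R :=
      AddMonoidHom.mk' (fun v => (v : R × (R × R)).2.1) (by intro a b; rfl) with hφ
    have hker : (D3 R).range.addSubgroupOf (D4 R).ker = φ.ker := by
      ext ⟨⟨x, a, b⟩, hv⟩
      have hb : b = 0 := by
        simpa [D4, AddMonoidHom.mem_ker, Prod.ext_iff] using hv
      simp [AddSubgroup.mem_addSubgroupOf, D3, AddMonoidHom.mem_ker, hφ,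
        Prod.ext_iff, hb, eq_comm, Subtype.ext_iff]
    have hsurj : Function.Surjective φ := by
      intro r
      refine ⟨⟨(0, (r, 0)), ?_⟩, rfl⟩
      simp [D4, AddMonoidHom.mem_ker, Prod.ext_iff]
    rw [hker]
    exact ⟨QuotientAddGroup.quotientKerEquivOfSurjective φ hsurj⟩
end
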